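/- Assume the compatibility relation: ρ₂ = ρ₁ − ρ₁ρ₄ + ψ₁ if m₁ ≤ m₂, and ρ₂ = ρ₁ − 1 + ρ₂ρ₄ + ψ₁ if m₁ > m₂. For i ∈ {1,…,n₁}, j ∈ {1,…,n₂}, k ∈ {1,…,n₃}, set t̂₃ := t₃ − (m₃/n₂)t₂ − ((n₂−m₃)/n₂)(m₁/n₁)t₁ + ((m₁−m₂)/n₁)t₁ + ρ₃t₂ − (m₃/n₂)ρ₁t₁ + ρ₂t₁, θ_{i,j,k} := 2πι(k − (m₃/n₂)j − ((n₂−m₃)/n₂)(m₁/n₁)i + ((m₁−m₂)/n₁)i + t̂₃)/n₃, and z_{i,j,k} := (e^{sθ_{i,j,k}})_{s=0}^{n₃−1} ∈ ℂ^{n₃}. Then K₃ (z_{i,j,k} ⊗ y_{i,j} ⊗ xᵢ) = δz⁻¹(e^{θ_{i,j,k}} − 1) · (z_{i,j,k} ⊗ y_{i,j} ⊗ xᵢ), where xᵢ and y_{i,j} are as in Theorem 4.2 and ⊗ is the Kronecker product. (Theorem 4.3: eigenpairs of K₃ in the case cos θα − cos θβ cos θγ ≥ 0.) -/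

import Mathlib

open Real Matrix

/-- The `n₁×n₁` block `S(a) = [[0, e^{−2πι t₁} I_a], [I_{n₁−a}, 0]]` with top-right
block of size `a × a` and bottom-left block of size `(n₁−a) × (n₁−a)`. -/
noncomputable def Sblk (n₁ : ℕ) (t₁ : ℝ) (a : ℕ) : Matrix (Fin n₁) (Fin n₁) ℂ :=
  Matrix.of fun s s' =>
    (if (s : ℕ) < a ∧ (s' : ℕ) = (s : ℕ) + (n₁ - a)
      then Complex.exp (-(2 * (π : ℂ) * Complex.I * (t₁ : ℂ))) else 0)
    + (if a ≤ (s : ℕ) ∧ (s' : ℕ) + a = (s : ℕ) then 1 else 0)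

/-- `J₁ = e^{2πι ρ₂ t₁} S(m₂)`. -/
noncomputable def J1 (n₁ : ℕ) (t₁ : ℝ) (ρ₂ m₂ : ℕ) : Matrix (Fin n₁) (Fin n₁) ℂ :=
  Complex.exp (2 * (π : ℂ) * Complex.I * (ρ₂ : ℂ) * (t₁ : ℂ)) • Sblk n₁ t₁ m₂

/-- `J₃` in the case `cos θα − cos θβ cos θγ ≥ 0`: an `n₂ × n₂` block matrix with
`n₁ × n₁` blocks, top-right block `e^{−2πι(t₂+ρ₁ρ₄t₁−ψ₁t₁)} I_{m₃} ⊗ S(m₂−m₁)` if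
`m₁ ≤ m₂` (resp. `e^{−2πι(t₂−ρ₂ρ₄t₁−ψ₁t₁)} I_{m₃} ⊗ S(n₁−m₁+m₂)` if `m₁ > m₂`),
bottom-left block `I_{n₂−m₃} ⊗ J₁`, all scaled by `e^{2πι ρ₃ t₂}`. -/
noncomputable def J3acute (n₁ n₂ : ℕ) (t₁ t₂ : ℝ) (ρ₁ ρ₂ ρ₃ ρ₄ ψ₁ m₁ m₂ m₃ : ℕ) :
    Matrix (Fin n₂ × Fin n₁) (Fin n₂ × Fin n₁) ℂ :=
  Matrix.of fun p q =>
    Complex.exp (2 * (π : ℂ) * Complex.I * (ρ₃ : ℂ) * (t₂ : ℂ)) *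
      ((if (p.1 : ℕ) < m₃ ∧ (q.1 : ℕ) = (p.1 : ℕ) + (n₂ - m₃) then
          (if m₁ ≤ m₂ then
            Complex.exp (-(2 * (π : ℂ) * Complex.I
                * ((t₂ : ℂ) + (ρ₁ : ℂ) * (ρ₄ : ℂ) * (t₁ : ℂ) - (ψ₁ : ℂ) * (t₁ : ℂ))))
              * Sblk n₁ t₁ (m₂ - m₁) p.2 q.2
          else
            Complex.exp (-(2 * (π : ℂ) * Complex.I
                * ((t₂ : ℂ) - (ρ₂ : ℂ) * (ρ₄ : ℂ) * (t₁ : ℂ) - (ψ₁ : ℂ) * (t₁ : ℂ))))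
              * Sblk n₁ t₁ (n₁ - m₁ + m₂) p.2 q.2)
        else 0)
      + (if m₃ ≤ (p.1 : ℕ) ∧ (q.1 : ℕ) + m₃ = (p.1 : ℕ)
          then J1 n₁ t₁ ρ₂ m₂ p.2 q.2 else 0))

/-- The Yee discretization `K₃` of `∂z`: `n₃ × n₃` block matrix with
`n₁n₂ × n₁n₂` blocks, `(1/δz)` times [`−I` on the block diagonal, `I` on the block
superdiagonal, `e^{2πι t₃} J₃` at block `(n₃−1, 0)`]. -/
noncomputable def K3 (n₁ n₂ n₃ : ℕ) (δz t₃ : ℝ)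
    (J : Matrix (Fin n₂ × Fin n₁) (Fin n₂ × Fin n₁) ℂ) :
    Matrix (Fin n₃ × Fin n₂ × Fin n₁) (Fin n₃ × Fin n₂ × Fin n₁) ℂ :=
  Matrix.of fun p q =>
    (1 / (δz : ℂ)) *
      ((if (q.1 : ℕ) = (p.1 : ℕ) + 1 ∧ q.2 = p.2 then 1 else 0)
        + (if (p.1 : ℕ) = n₃ - 1 ∧ (q.1 : ℕ) = 0
            then Complex.exp (2 * (π : ℂ) * Complex.I * (t₃ : ℂ)) * J p.2 q.2 else 0)
        - (if p = q then 1 else 0))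

/-!
Each of `S(a)`, `J₁`, `J₃` and `δz K₃ + I` is a twisted cyclic shift `[[0, c I_a], [d I_{n-a}, 0]]`,
with scalar entries (`S`, `J₁`) or block entries (`J₃`, `K₃`). Such a shift maps the exponential
vector `(e^{sθ})_s` to `d e^{-aθ}` times itself as soon as `c e^{nθ} = d`, and for block entries
`T`, `B` with common eigenvector `w` it maps `(e^{sθ})_s ⊗ w` the same way, `c`, `d` being the
eigenvalues of `T`, `B`. Working from the innermost factor outwards, each condition `c e^{nθ} = d`
is an identity between exponents modulo `2πι`, obtained from the definitions of `θᵢ`, `θ_{i,j}`,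
`θ_{i,j,k}` by clearing denominators; for the top block of `J₃` it is exactly the compatibility
relation between `ρ₁, ρ₂, ρ₄, ψ₁`.
-/

section TwistedShift

variable {R : Type*} [CommSemiring R] {ι : Type*} [Fintype ι]

/-- `[[0, c I_a], [d I_{n-a}, 0]]`: the cyclic shift by `a` whose wrapped-around entries are
weighted by `c` and the others by `d`. -/
def twistedShift (n a : ℕ) (c d : R) : Matrix (Fin n) (Fin n) R :=
  Matrix.of fun s s' =>
    (if (s : ℕ) < a ∧ (s' : ℕ) = (s : ℕ) + (n - a) then c else 0)
    + (if a ≤ (s : ℕ) ∧ (s' : ℕ) + a = (s : ℕ) then d else 0)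

/-- The block version `[[0, I_a ⊗ T], [I_{n-a} ⊗ B, 0]]`. -/
def blockTwistedShift (n a : ℕ) (T B : Matrix ι ι R) : Matrix (Fin n × ι) (Fin n × ι) R :=
  Matrix.of fun p q =>
    (if (p.1 : ℕ) < a ∧ (q.1 : ℕ) = (p.1 : ℕ) + (n - a) then T p.2 q.2 else 0)
    + (if a ≤ (p.1 : ℕ) ∧ (q.1 : ℕ) + a = (p.1 : ℕ) then B p.2 q.2 else 0)

theorem twistedShift_mulVec_apply {n a : ℕ} (ha : a ≤ n) (c d : R) (v : Fin n → R)
    (s : Fin n) :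
    (twistedShift n a c d *ᵥ v) s
      = if h : (s : ℕ) < a then c * v ⟨s + (n - a), by omega⟩ else d * v ⟨s - a, by omega⟩ := by
  simp only [mulVec, dotProduct, twistedShift, Matrix.of_apply, add_mul, ite_mul, zero_mul,
    Finset.sum_add_distrib]
  split_ifs with h
  · rw [Finset.sum_eq_single_of_mem ⟨s + (n - a), by omega⟩ (Finset.mem_univ _),
      Finset.sum_eq_zero]
    · simp [h]
    · intro s' _; rw [if_neg]; omega
    · intro s' _ hs'; rw [if_neg]; rintro ⟨-, h'⟩; exact hs' (Fin.ext h')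
  · rw [Finset.sum_eq_zero, Finset.sum_eq_single_of_mem ⟨s - a, by omega⟩ (Finset.mem_univ _)]
    · simp only [if_pos (show a ≤ (s : ℕ) ∧ s - a + a = (s : ℕ) by omega), zero_add]
    · intro s' _ hs'
      rw [if_neg]
      rintro ⟨-, h'⟩
      exact hs' (Fin.ext (show (s' : ℕ) = s - a by omega))
    · intro s' _; rw [if_neg]; omega

theorem blockTwistedShift_mulVec_kron {n a : ℕ} (T B : Matrix ι ι R)
    (v : Fin n → R) (w : ι → R) {C D : R} (hT : T *ᵥ w = C • w) (hB : B *ᵥ w = D • w) :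
    blockTwistedShift n a T B *ᵥ (fun p => v p.1 * w p.2)
      = fun p => (twistedShift n a C D *ᵥ v) p.1 * w p.2 := by
  ext ⟨s, u⟩
  have hT' : ∑ u', T u u' * w u' = C * w u := congrFun hT u
  have hB' : ∑ u', B u u' * w u' = D * w u := congrFun hB u
  simp only [mulVec, dotProduct, blockTwistedShift, twistedShift, Matrix.of_apply,
    Fintype.sum_prod_type, Finset.sum_mul]
  refine Finset.sum_congr rfl fun s' _ => ?_
  simp only [mul_left_comm _ (v s'), ← Finset.mul_sum, add_mul, ite_mul, zero_mul,
    Finset.sum_add_distrib, Finset.sum_ite_irrel, Finset.sum_const_zero, hT', hB']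
  split_ifs <;> ring

end TwistedShift

noncomputable def geomVec (n : ℕ) (θ : ℂ) : Fin n → ℂ := fun s => Complex.exp ((s : ℕ) * θ)

theorem twistedShift_mulVec_geomVec {n a : ℕ} (ha : a ≤ n) {c d θ : ℂ}
    (h : c * Complex.exp (n * θ) = d) :
    twistedShift n a c d *ᵥ geomVec n θ = (d * Complex.exp (-a * θ)) • geomVec n θ := by
  ext s
  rw [twistedShift_mulVec_apply ha, Pi.smul_apply, smul_eq_mul]
  split_ifs with hs
  · simp only [geomVec, ← h, mul_assoc, ← Complex.exp_add]
    congr 2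
    push_cast [Nat.cast_sub ha]
    ring
  · simp only [geomVec, mul_assoc, ← Complex.exp_add]
    congr 2
    push_cast [Nat.cast_sub (not_lt.1 hs)]
    ring

section SBlock

variable {n₁ : ℕ} {t₁ : ℝ} {θ₁ : ℂ} {i : ℤ}

theorem Sblk_eq_twistedShift (a : ℕ) :
    Sblk n₁ t₁ a = twistedShift n₁ a (Complex.exp (-(2 * π * Complex.I * t₁))) 1 :=
  rfl

theorem Sblk_mulVec_geomVec {a : ℕ} (ha : a ≤ n₁)
    (hθ₁ : n₁ * θ₁ = 2 * π * Complex.I * (i + t₁)) :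
    Sblk n₁ t₁ a *ᵥ geomVec n₁ θ₁ = Complex.exp (-a * θ₁) • geomVec n₁ θ₁ := by
  rw [Sblk_eq_twistedShift, twistedShift_mulVec_geomVec ha, one_mul]
  rw [← Complex.exp_add, Complex.exp_eq_one_iff]
  exact ⟨i, by linear_combination hθ₁⟩

theorem J1_mulVec_geomVec {ρ₂ m₂ : ℕ} (hm₂ : m₂ ≤ n₁)
    (hθ₁ : n₁ * θ₁ = 2 * π * Complex.I * (i + t₁)) :
    J1 n₁ t₁ ρ₂ m₂ *ᵥ geomVec n₁ θ₁
      = Complex.exp (2 * π * Complex.I * ρ₂ * t₁ - m₂ * θ₁) • geomVec n₁ θ₁ := by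
  rw [J1, smul_mulVec, Sblk_mulVec_geomVec hm₂ hθ₁, smul_smul, ← Complex.exp_add]
  ring_nf

end SBlock

section J3Block

variable {n₁ n₂ : ℕ} {t₁ t₂ : ℝ} {ρ₁ ρ₂ ρ₃ ρ₄ ψ₁ m₁ m₂ m₃ : ℕ} {θ₁ θ₂ : ℂ} {i j : ℤ}

noncomputable def J3acuteTop (n₁ : ℕ) (t₁ t₂ : ℝ) (ρ₁ ρ₂ ρ₄ ψ₁ m₁ m₂ : ℕ) :
    Matrix (Fin n₁) (Fin n₁) ℂ :=
  if m₁ ≤ m₂ then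
    Complex.exp (-(2 * π * Complex.I * (t₂ + ρ₁ * ρ₄ * t₁ - ψ₁ * t₁))) • Sblk n₁ t₁ (m₂ - m₁)
  else
    Complex.exp (-(2 * π * Complex.I * (t₂ - ρ₂ * ρ₄ * t₁ - ψ₁ * t₁))) • Sblk n₁ t₁ (n₁ - m₁ + m₂)

theorem J3acute_eq_smul_blockTwistedShift :
    J3acute n₁ n₂ t₁ t₂ ρ₁ ρ₂ ρ₃ ρ₄ ψ₁ m₁ m₂ m₃
      = Complex.exp (2 * π * Complex.I * ρ₃ * t₂)
        • blockTwistedShift n₂ m₃ (J3acuteTop n₁ t₁ t₂ ρ₁ ρ₂ ρ₄ ψ₁ m₁ m₂) (J1 n₁ t₁ ρ₂ m₂) := by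
  ext p q
  simp only [J3acute, blockTwistedShift, J3acuteTop, Matrix.of_apply, Matrix.smul_apply,
    smul_eq_mul]
  split_ifs <;> rfl

theorem J3acuteTop_mulVec_geomVec (hm₁ : m₁ ≤ n₁) (hm₂ : m₂ ≤ n₁)
    (hcompat₁ : m₁ ≤ m₂ → (ρ₂ : ℤ) = ρ₁ - ρ₁ * ρ₄ + ψ₁)
    (hcompat₂ : m₂ < m₁ → (ρ₂ : ℤ) = ρ₁ - 1 + ρ₂ * ρ₄ + ψ₁)
    (hθ₁ : n₁ * θ₁ = 2 * π * Complex.I * (i + t₁))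
    (hθ₂ : n₂ * θ₂ + m₁ * θ₁ = 2 * π * Complex.I * (j + t₂ + ρ₁ * t₁)) :
    J3acuteTop n₁ t₁ t₂ ρ₁ ρ₂ ρ₄ ψ₁ m₁ m₂ *ᵥ geomVec n₁ θ₁
      = Complex.exp (2 * π * Complex.I * ρ₂ * t₁ - m₂ * θ₁ - n₂ * θ₂) • geomVec n₁ θ₁ := by
  unfold J3acuteTop
  split_ifs with hm
  · have hρ : (ρ₂ : ℂ) = ρ₁ - ρ₁ * ρ₄ + ψ₁ := by exact_mod_cast hcompat₁ hm
    rw [smul_mulVec, Sblk_mulVec_geomVec (by omega) hθ₁, smul_smul, ← Complex.exp_add]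
    congr 1
    rw [Complex.exp_eq_exp_iff_exists_int]
    refine ⟨j, ?_⟩
    push_cast [Nat.cast_sub hm]
    linear_combination hθ₂ - 2 * π * Complex.I * t₁ * hρ
  · have hρ : (ρ₂ : ℂ) = ρ₁ - 1 + ρ₂ * ρ₄ + ψ₁ := by exact_mod_cast hcompat₂ (by omega)
    rw [smul_mulVec, Sblk_mulVec_geomVec (by omega) hθ₁, smul_smul, ← Complex.exp_add]
    congr 1
    rw [Complex.exp_eq_exp_iff_exists_int]
    refine ⟨j - i, ?_⟩
    push_cast [Nat.cast_sub hm₁]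
    linear_combination hθ₂ - hθ₁ - 2 * π * Complex.I * t₁ * hρ

theorem J3acute_mulVec_kron (hm₁ : m₁ ≤ n₁) (hm₂ : m₂ ≤ n₁) (hm₃ : m₃ ≤ n₂)
    (hcompat₁ : m₁ ≤ m₂ → (ρ₂ : ℤ) = ρ₁ - ρ₁ * ρ₄ + ψ₁)
    (hcompat₂ : m₂ < m₁ → (ρ₂ : ℤ) = ρ₁ - 1 + ρ₂ * ρ₄ + ψ₁)
    (hθ₁ : n₁ * θ₁ = 2 * π * Complex.I * (i + t₁))
    (hθ₂ : n₂ * θ₂ + m₁ * θ₁ = 2 * π * Complex.I * (j + t₂ + ρ₁ * t₁)) :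
    J3acute n₁ n₂ t₁ t₂ ρ₁ ρ₂ ρ₃ ρ₄ ψ₁ m₁ m₂ m₃ *ᵥ (fun p => geomVec n₂ θ₂ p.1 * geomVec n₁ θ₁ p.2)
      = Complex.exp (2 * π * Complex.I * (ρ₃ * t₂ + ρ₂ * t₁) - m₂ * θ₁ - m₃ * θ₂)
        • (fun p => geomVec n₂ θ₂ p.1 * geomVec n₁ θ₁ p.2) := by
  rw [J3acute_eq_smul_blockTwistedShift, smul_mulVec,
    blockTwistedShift_mulVec_kron _ _ _ _
      (J3acuteTop_mulVec_geomVec hm₁ hm₂ hcompat₁ hcompat₂ hθ₁ hθ₂) (J1_mulVec_geomVec hm₂ hθ₁),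
    twistedShift_mulVec_geomVec hm₃ (by rw [← Complex.exp_add]; ring_nf)]
  ext p
  simp only [Pi.smul_apply, smul_eq_mul, ← mul_assoc, ← Complex.exp_add]
  ring_nf

end J3Block

section K3Block

variable {n₁ n₂ n₃ : ℕ} {δz t₃ : ℝ} {J : Matrix (Fin n₂ × Fin n₁) (Fin n₂ × Fin n₁) ℂ}

theorem K3_eq_smul_blockTwistedShift_sub_one :
    K3 n₁ n₂ n₃ δz t₃ J
      = (1 / δz : ℂ) • (blockTwistedShift n₃ (n₃ - 1) 1
          (Complex.exp (2 * π * Complex.I * t₃) • J) - 1) := by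
  ext ⟨s, u⟩ ⟨s', u'⟩
  simp only [K3, blockTwistedShift, Matrix.of_apply, Matrix.smul_apply, Matrix.sub_apply,
    Matrix.one_apply, smul_eq_mul, Prod.mk.injEq]
  have := s.isLt
  have := s'.isLt
  congr 2
  congr 1
  · rcases eq_or_ne u u' with rfl | hu
    · simp only [and_true, if_true]
      split_ifs <;> first | rfl | omega
    · simp [hu, Ne.symm hu]
  · split_ifs <;> first | rfl | omega

theorem K3_mulVec_kron (hn₃ : 1 ≤ n₃) {w : Fin n₂ × Fin n₁ → ℂ} {μ θ : ℂ}
    (hJ : J *ᵥ w = μ • w) (hθ : Complex.exp (2 * π * Complex.I * t₃) * μ = Complex.exp (n₃ * θ)) :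
    K3 n₁ n₂ n₃ δz t₃ J *ᵥ (fun p => geomVec n₃ θ p.1 * w p.2)
      = ((1 / δz) * (Complex.exp θ - 1)) • (fun p => geomVec n₃ θ p.1 * w p.2) := by
  have hshift : (Complex.exp (2 * π * Complex.I * t₃) * μ) * Complex.exp (-(n₃ - 1 : ℕ) * θ)
      = Complex.exp θ := by
    rw [hθ, ← Complex.exp_add]
    push_cast [Nat.cast_sub hn₃]
    ring_nf
  rw [K3_eq_smul_blockTwistedShift_sub_one, smul_mulVec, sub_mulVec, one_mulVec,
    blockTwistedShift_mulVec_kron _ _ _ _ ((one_mulVec w).trans (one_smul ℂ w).symm)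
      (by rw [smul_mulVec, hJ, smul_smul]),
    twistedShift_mulVec_geomVec (Nat.sub_le _ _) ((one_mul _).trans hθ.symm), hshift]
  ext p
  simp only [Pi.smul_apply, Pi.sub_apply, smul_eq_mul]
  ring

end K3Block

theorem stmt_7_general (n₁ n₂ n₃ : ℕ) (hn₁ : 1 ≤ n₁) (hn₂ : 1 ≤ n₂) (hn₃ : 1 ≤ n₃)
    (δz : ℝ) (t₁ t₂ t₃ : ℝ)
    (ρ₁ ρ₂ ρ₃ ρ₄ ψ₁ : ℕ)
    (m₁ m₂ m₃ : ℕ) (hm₁ : m₁ ≤ n₁) (hm₂ : m₂ ≤ n₁) (hm₃ : m₃ ≤ n₂)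
    (hcompat₁ : m₁ ≤ m₂ → (ρ₂ : ℤ) = (ρ₁ : ℤ) - (ρ₁ : ℤ) * ρ₄ + ψ₁)
    (hcompat₂ : m₂ < m₁ → (ρ₂ : ℤ) = (ρ₁ : ℤ) - 1 + (ρ₂ : ℤ) * ρ₄ + ψ₁)
    (i j k : ℕ)
    (θi : ℂ) (hθi : θi = 2 * (π : ℂ) * Complex.I * ((i : ℂ) + (t₁ : ℂ)) / (n₁ : ℂ))
    (x : Fin n₁ → ℂ) (hx : ∀ s : Fin n₁, x s = Complex.exp (((s : ℕ) : ℂ) * θi))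
    (t₂hat : ℝ) (ht₂hat : t₂hat = t₂ - (m₁ : ℝ) / n₁ * t₁ + (ρ₁ : ℝ) * t₁)
    (θij : ℂ)
    (hθij : θij = 2 * (π : ℂ) * Complex.I
      * ((((j : ℝ) - (m₁ : ℝ) / n₁ * i + t₂hat : ℝ)) : ℂ) / (n₂ : ℂ))
    (y : Fin n₂ → ℂ) (hy : ∀ s : Fin n₂, y s = Complex.exp (((s : ℕ) : ℂ) * θij))
    (t₃hat : ℝ)
    (ht₃hat : t₃hat = t₃ - (m₃ : ℝ) / n₂ * t₂
      - ((n₂ : ℝ) - m₃) / n₂ * ((m₁ : ℝ) / n₁) * t₁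
      + ((m₁ : ℝ) - m₂) / n₁ * t₁
      + (ρ₃ : ℝ) * t₂ - (m₃ : ℝ) / n₂ * ((ρ₁ : ℝ) * t₁) + (ρ₂ : ℝ) * t₁)
    (θijk : ℂ)
    (hθijk : θijk = 2 * (π : ℂ) * Complex.I
      * ((((k : ℝ) - (m₃ : ℝ) / n₂ * j
          - ((n₂ : ℝ) - m₃) / n₂ * ((m₁ : ℝ) / n₁) * i
          + ((m₁ : ℝ) - m₂) / n₁ * i + t₃hat : ℝ)) : ℂ) / (n₃ : ℂ))
    (z : Fin n₃ → ℂ) (hz : ∀ s : Fin n₃, z s = Complex.exp (((s : ℕ) : ℂ) * θijk)) :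
    (K3 n₁ n₂ n₃ δz t₃ (J3acute n₁ n₂ t₁ t₂ ρ₁ ρ₂ ρ₃ ρ₄ ψ₁ m₁ m₂ m₃)).mulVec
        (fun p => z p.1 * y p.2.1 * x p.2.2)
      = ((1 / (δz : ℂ)) * (Complex.exp θijk - 1))
          • (fun p => z p.1 * y p.2.1 * x p.2.2) := by
  have hn₁' : (n₁ : ℂ) ≠ 0 := Nat.cast_ne_zero.2 (by omega)
  have hn₂' : (n₂ : ℂ) ≠ 0 := Nat.cast_ne_zero.2 (by omega)
  have hn₃' : (n₃ : ℂ) ≠ 0 := Nat.cast_ne_zero.2 (by omega)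
  have hθ₁ : (n₁ : ℂ) * θi = 2 * π * Complex.I * ((i : ℤ) + t₁) := by
    rw [hθi]; push_cast; field_simp
  have hθ₂ : (n₂ : ℂ) * θij + m₁ * θi = 2 * π * Complex.I * ((j : ℤ) + t₂ + ρ₁ * t₁) := by
    rw [hθij, ht₂hat, hθi]; push_cast; field_simp; ring
  have hθ₃ : (n₃ : ℂ) * θijk + m₃ * θij + m₂ * θi
      = 2 * π * Complex.I * (k + t₃ + ρ₃ * t₂ + ρ₂ * t₁) := by
    rw [hθijk, ht₃hat, hθij, ht₂hat, hθi]; push_cast; field_simp; ring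
  obtain rfl : x = geomVec n₁ θi := funext hx
  obtain rfl : y = geomVec n₂ θij := funext hy
  obtain rfl : z = geomVec n₃ θijk := funext hz
  have hJ3 := J3acute_mulVec_kron (ρ₃ := ρ₃) (m₃ := m₃) hm₁ hm₂ hm₃ hcompat₁ hcompat₂ hθ₁ hθ₂
  have hK3 := K3_mulVec_kron (δz := δz) (t₃ := t₃) (θ := θijk) hn₃ hJ3 (by
    rw [← Complex.exp_add, Complex.exp_eq_exp_iff_exists_int]
    exact ⟨-k, by push_cast; linear_combination -hθ₃⟩)
  simpa only [mul_assoc] using hK3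

/-- Theorem 4.3: eigenpairs of `K₃` in the case `cos θα − cos θβ cos θγ ≥ 0`. -/
theorem stmt_7 (n₁ n₂ n₃ : ℕ) (hn₁ : 1 ≤ n₁) (hn₂ : 1 ≤ n₂) (hn₃ : 1 ≤ n₃)
    (δz : ℝ) (hδz : 0 < δz) (t₁ t₂ t₃ : ℝ)
    (ρ₁ ρ₂ ρ₃ ρ₄ ψ₁ : ℕ) (hρ₁ : ρ₁ ≤ 1) (hρ₂ : ρ₂ ≤ 1) (hρ₃ : ρ₃ ≤ 1)
    (hρ₄ : ρ₄ ≤ 1) (hψ₁ : ψ₁ ≤ 1)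
    (m₁ m₂ m₃ : ℕ) (hm₁ : m₁ ≤ n₁) (hm₂ : m₂ ≤ n₁) (hm₃ : m₃ ≤ n₂)
    (hcompat₁ : m₁ ≤ m₂ → (ρ₂ : ℤ) = (ρ₁ : ℤ) - (ρ₁ : ℤ) * ρ₄ + ψ₁)
    (hcompat₂ : m₂ < m₁ → (ρ₂ : ℤ) = (ρ₁ : ℤ) - 1 + (ρ₂ : ℤ) * ρ₄ + ψ₁)
    (i j k : ℕ) (hi : 1 ≤ i) (hin : i ≤ n₁) (hj : 1 ≤ j) (hjn : j ≤ n₂)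
    (hk : 1 ≤ k) (hkn : k ≤ n₃)
    (θi : ℂ) (hθi : θi = 2 * (π : ℂ) * Complex.I * ((i : ℂ) + (t₁ : ℂ)) / (n₁ : ℂ))
    (x : Fin n₁ → ℂ) (hx : ∀ s : Fin n₁, x s = Complex.exp (((s : ℕ) : ℂ) * θi))
    (t₂hat : ℝ) (ht₂hat : t₂hat = t₂ - (m₁ : ℝ) / n₁ * t₁ + (ρ₁ : ℝ) * t₁)
    (θij : ℂ)
    (hθij : θij = 2 * (π : ℂ) * Complex.I
      * ((((j : ℝ) - (m₁ : ℝ) / n₁ * i + t₂hat : ℝ)) : ℂ) / (n₂ : ℂ))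
    (y : Fin n₂ → ℂ) (hy : ∀ s : Fin n₂, y s = Complex.exp (((s : ℕ) : ℂ) * θij))
    (t₃hat : ℝ)
    (ht₃hat : t₃hat = t₃ - (m₃ : ℝ) / n₂ * t₂
      - ((n₂ : ℝ) - m₃) / n₂ * ((m₁ : ℝ) / n₁) * t₁
      + ((m₁ : ℝ) - m₂) / n₁ * t₁
      + (ρ₃ : ℝ) * t₂ - (m₃ : ℝ) / n₂ * ((ρ₁ : ℝ) * t₁) + (ρ₂ : ℝ) * t₁)
    (θijk : ℂ)
    (hθijk : θijk = 2 * (π : ℂ) * Complex.I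
      * ((((k : ℝ) - (m₃ : ℝ) / n₂ * j
          - ((n₂ : ℝ) - m₃) / n₂ * ((m₁ : ℝ) / n₁) * i
          + ((m₁ : ℝ) - m₂) / n₁ * i + t₃hat : ℝ)) : ℂ) / (n₃ : ℂ))
    (z : Fin n₃ → ℂ) (hz : ∀ s : Fin n₃, z s = Complex.exp (((s : ℕ) : ℂ) * θijk)) :
    (K3 n₁ n₂ n₃ δz t₃ (J3acute n₁ n₂ t₁ t₂ ρ₁ ρ₂ ρ₃ ρ₄ ψ₁ m₁ m₂ m₃)).mulVec
        (fun p => z p.1 * y p.2.1 * x p.2.2)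
      = ((1 / (δz : ℂ)) * (Complex.exp θijk - 1))
          • (fun p => z p.1 * y p.2.1 * x p.2.2) :=
  stmt_7_general n₁ n₂ n₃ hn₁ hn₂ hn₃ δz t₁ t₂ t₃ ρ₁ ρ₂ ρ₃ ρ₄ ψ₁ m₁ m₂ m₃ hm₁ hm₂ hm₃ hcompat₁
    hcompat₂ i j k θi hθi x hx t₂hat ht₂hat θij hθij y hy t₃hat ht₃hat θijk hθijk z hz
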